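/- Let h_x = −(1/2^d)(∏_{i=0}^{d−1}(π−θ̄_i)/π) x* + (1/2^d)[x − Σ_{i=0}^{d−1}(sin θ̄_i/π)(∏_{j=i+1}^{d−1}(π−θ̄_j)/π)(‖x*‖/‖x‖)x], where θ̄_0 = ∠(x,x*) and θ̄_i = g(θ̄_{i−1}). Then for all nonzero x, y: ‖h_x − h_y‖ ≤ (1/2^d + (6d + 4d²)/(π 2^d) · max(1/‖x‖, 1/‖y‖) · ‖x*‖) ‖x − y‖. -/

import Mathlib

/-!
On `(0, π)` the derivative of `g` is `(π - θ) sin θ / (π √(1 - a²))` with `a` the argument of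
`arccos`, and `((π - θ) sin θ / π)² ≤ 1 - a²`, so `0 ≤ g' ≤ 1`: `g`, and with it every `θ̄ᵢ` as a
function of `θ̄₀`, is `1`-Lipschitz on `[0, π]`. Products of factors in `[-1, 1]` are Lipschitz in
each factor, so the product and the sine sum in `h_x` move by at most `d · δ/π` and
`d (1 + d/π) · δ/π`, where `δ = |∠(x, x*) - ∠(y, x*)|`. The triangle inequality for angles and the
chord bound `∠(u, v) ≤ (π/2) ‖u - v‖` for unit vectors give `δ ≤ π ‖x - y‖ / ‖x‖`. Writing the last
term of `h_x` through `x / ‖x‖`, the difference `h_x - h_y` splits into three terms bounded by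
these estimates.
-/

noncomputable def g (θ : ℝ) : ℝ :=
  Real.arccos (((Real.pi - θ) * Real.cos θ + Real.sin θ) / Real.pi)

noncomputable def thetaSeq (θ0 : ℝ) : ℕ → ℝ
  | 0 => θ0
  | (i + 1) => g (thetaSeq θ0 i)

/-- The expected gradient-like field `h_x` of the `d`-layer random ReLU network objective. -/
noncomputable def hfield (k d : ℕ) (xs x : EuclideanSpace ℝ (Fin k)) : EuclideanSpace ℝ (Fin k) :=
  (-(((2 : ℝ) ^ d)⁻¹ *
      ∏ i ∈ Finset.range d,
        (Real.pi - thetaSeq (InnerProductGeometry.angle x xs) i) / Real.pi)) • xs +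
  ((2 : ℝ) ^ d)⁻¹ •
    (x - ((∑ i ∈ Finset.range d,
        (Real.sin (thetaSeq (InnerProductGeometry.angle x xs) i) / Real.pi) *
          ∏ j ∈ Finset.Ico (i + 1) d,
            (Real.pi - thetaSeq (InnerProductGeometry.angle x xs) j) / Real.pi) *
      (‖xs‖ / ‖x‖)) • x)

open Real Set

noncomputable def gArg (θ : ℝ) : ℝ := ((π - θ) * cos θ + sin θ) / π

noncomputable def gDeriv (θ : ℝ) : ℝ := (π - θ) * sin θ / π / √(1 - gArg θ ^ 2)

lemma hasDerivAt_gArg (θ : ℝ) : HasDerivAt gArg (-((π - θ) * sin θ / π)) θ := by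
  refine (((((hasDerivAt_id θ).const_sub π).mul (hasDerivAt_cos θ)).add
    (hasDerivAt_sin θ)).div_const π).congr_deriv ?_
  simp only [id]
  ring

lemma gArg_mem_Ioo {θ : ℝ} (h0 : 0 < θ) (hπ : θ ≤ π) : gArg θ ∈ Ioo (-1) 1 := by
  have hsin : 0 ≤ sin θ := sin_nonneg_of_nonneg_of_le_pi h0.le hπ
  have hcos : -(π - θ) ≤ (π - θ) * cos θ ∧ (π - θ) * cos θ ≤ π - θ := by
    constructor <;> nlinarith [neg_one_le_cos θ, cos_le_one θ]
  rw [gArg, mem_Ioo, lt_div_iff₀ pi_pos, div_lt_one pi_pos]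
  constructor <;> linarith [sin_lt h0]

lemma sq_le_one_sub_gArg_sq {θ : ℝ} (h0 : 0 ≤ θ) (hπ : θ ≤ π) :
    ((π - θ) * sin θ / π) ^ 2 ≤ 1 - gArg θ ^ 2 := by
  have hsin : 0 ≤ sin θ := sin_nonneg_of_nonneg_of_le_pi h0 hπ
  have hsinθ : sin θ ≤ θ := sin_le h0
  have hsin2θ : 2 * sin θ * cos θ ≤ 2 * θ := by
    rw [← sin_two_mul]; exact sin_le (by positivity)
  -- `(π - θ)² + (π - θ) sin 2θ + sin² θ ≤ (π - θ)² + 2 (π - θ) θ + θ² = π²`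
  have hpi : ((π - θ) * sin θ) ^ 2 + ((π - θ) * cos θ + sin θ) ^ 2 ≤ π ^ 2 := by
    have hexp : ((π - θ) * sin θ) ^ 2 + ((π - θ) * cos θ + sin θ) ^ 2
        = (π - θ) ^ 2 + (π - θ) * (2 * sin θ * cos θ) + sin θ ^ 2 := by
      linear_combination (π - θ) ^ 2 * sin_sq_add_cos_sq θ
    rw [hexp]
    nlinarith [mul_le_mul_of_nonneg_left hsin2θ (sub_nonneg.2 hπ), mul_le_mul hsinθ hsinθ hsin h0]
  rw [gArg, div_pow, div_pow, le_sub_iff_add_le, ← add_div, div_le_one (by positivity)]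
  exact hpi

lemma hasDerivAt_g {θ : ℝ} (h0 : 0 < θ) (hπ : θ ≤ π) : HasDerivAt g (gDeriv θ) θ := by
  obtain ⟨hlo, hhi⟩ := gArg_mem_Ioo h0 hπ
  refine ((hasDerivAt_arccos hlo.ne' hhi.ne).comp θ (hasDerivAt_gArg θ)).congr_deriv ?_
  rw [gDeriv]
  ring

lemma gDeriv_mem_Icc {θ : ℝ} (h0 : 0 < θ) (hπ : θ ≤ π) : gDeriv θ ∈ Icc 0 1 := by
  obtain ⟨hlo, hhi⟩ := gArg_mem_Ioo h0 hπ
  have hnum : 0 ≤ (π - θ) * sin θ / π :=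
    div_nonneg (mul_nonneg (sub_nonneg.2 hπ) (sin_nonneg_of_nonneg_of_le_pi h0.le hπ)) pi_pos.le
  have hden : 0 < √(1 - gArg θ ^ 2) := sqrt_pos.2 (by nlinarith)
  refine ⟨div_nonneg hnum hden.le, (div_le_one hden).2 ?_⟩
  exact le_sqrt_of_sq_le (sq_le_one_sub_gArg_sq h0.le hπ)

lemma continuous_g : Continuous g :=
  continuous_arccos.comp (by fun_prop)

lemma g_sub_g_mem_Icc {a b : ℝ} (ha : a ∈ Icc 0 π) (hb : b ∈ Icc 0 π) (hab : a ≤ b) :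
    g b - g a ∈ Icc 0 (b - a) := by
  have hderiv : ∀ θ ∈ interior (Icc 0 π), HasDerivWithinAt g (gDeriv θ) (interior (Icc 0 π)) θ :=
    fun θ hθ ↦ by
      rw [interior_Icc] at hθ
      exact (hasDerivAt_g hθ.1 hθ.2.le).hasDerivWithinAt
  have hmono : MonotoneOn g (Icc 0 π) :=
    monotoneOn_of_hasDerivWithinAt_nonneg (convex_Icc 0 π) continuous_g.continuousOn hderiv
      fun θ hθ ↦ by rw [interior_Icc] at hθ; exact (gDeriv_mem_Icc hθ.1 hθ.2.le).1
  have hmono' : MonotoneOn (fun θ ↦ θ - g θ) (Icc 0 π) :=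
    monotoneOn_of_hasDerivWithinAt_nonneg (convex_Icc 0 π)
      (continuous_id.sub continuous_g).continuousOn
      (fun θ hθ ↦ (hasDerivWithinAt_id θ _).sub (hderiv θ hθ))
      fun θ hθ ↦ by rw [interior_Icc] at hθ; linarith [(gDeriv_mem_Icc hθ.1 hθ.2.le).2]
  constructor <;> linarith [hmono ha hb hab, hmono' ha hb hab]

lemma abs_g_sub_g_le {a b : ℝ} (ha : a ∈ Icc 0 π) (hb : b ∈ Icc 0 π) :
    |g a - g b| ≤ |a - b| := by
  rcases le_total a b with hab | hab
  · obtain ⟨h0, h1⟩ := g_sub_g_mem_Icc ha hb hab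
    rw [abs_sub_comm, abs_sub_comm a, abs_of_nonneg h0, abs_of_nonneg (by linarith)]
    exact h1
  · obtain ⟨h0, h1⟩ := g_sub_g_mem_Icc hb ha hab
    rw [abs_of_nonneg h0, abs_of_nonneg (by linarith)]
    exact h1

lemma g_mem_Icc (θ : ℝ) : g θ ∈ Icc 0 π := ⟨arccos_nonneg _, arccos_le_pi _⟩

lemma thetaSeq_mem_Icc {θ₀ : ℝ} (h : θ₀ ∈ Icc 0 π) : ∀ i, thetaSeq θ₀ i ∈ Icc 0 π
  | 0 => h
  | _ + 1 => g_mem_Icc _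

lemma abs_thetaSeq_sub_le {a b : ℝ} (ha : a ∈ Icc 0 π) (hb : b ∈ Icc 0 π) :
    ∀ i, |thetaSeq a i - thetaSeq b i| ≤ |a - b|
  | 0 => le_rfl
  | i + 1 =>
    (abs_g_sub_g_le (thetaSeq_mem_Icc ha i) (thetaSeq_mem_Icc hb i)).trans
      (abs_thetaSeq_sub_le ha hb i)

lemma abs_mul_sub_mul_le (p q p' q' : ℝ) : |p * q - p' * q'| ≤ |p| * |q - q'| + |p - p'| * |q'| :=
  calc |p * q - p' * q'| = |p * (q - q') + (p - p') * q'| := by ring_nf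
    _ ≤ |p| * |q - q'| + |p - p'| * |q'| := by rw [← abs_mul, ← abs_mul]; exact abs_add_le _ _

lemma abs_prod_sub_prod_le {ι : Type*} (s : Finset ι) {f h : ι → ℝ}
    (hf : ∀ i ∈ s, |f i| ≤ 1) (hh : ∀ i ∈ s, |h i| ≤ 1) :
    |∏ i ∈ s, f i - ∏ i ∈ s, h i| ≤ ∑ i ∈ s, |f i - h i| := by
  classical
  induction s using Finset.induction_on with
  | empty => simp
  | insert a s ha ih =>
    simp only [Finset.forall_mem_insert] at hf hh
    have hprod : |∏ i ∈ s, h i| ≤ 1 := by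
      rw [Finset.abs_prod]
      exact Finset.prod_le_one (fun i _ ↦ abs_nonneg _) hh.2
    rw [Finset.prod_insert ha, Finset.prod_insert ha, Finset.sum_insert ha]
    calc |f a * ∏ i ∈ s, f i - h a * ∏ i ∈ s, h i|
        ≤ |f a| * |∏ i ∈ s, f i - ∏ i ∈ s, h i| + |f a - h a| * |∏ i ∈ s, h i| :=
          abs_mul_sub_mul_le _ _ _ _
      _ ≤ 1 * ∑ i ∈ s, |f i - h i| + |f a - h a| * 1 := by
        gcongr
        exacts [hf.1, ih hf.2 hh.2]
      _ = |f a - h a| + ∑ i ∈ s, |f i - h i| := by ring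

noncomputable def layerProd (θ₀ : ℝ) (s : Finset ℕ) : ℝ := ∏ j ∈ s, (π - thetaSeq θ₀ j) / π

noncomputable def sinSum (d : ℕ) (θ₀ : ℝ) : ℝ :=
  ∑ i ∈ Finset.range d, sin (thetaSeq θ₀ i) / π * layerProd θ₀ (Finset.Ico (i + 1) d)

lemma abs_pi_sub_div_pi_le_one {θ : ℝ} (h : θ ∈ Icc 0 π) : |(π - θ) / π| ≤ 1 := by
  rw [abs_le, le_div_iff₀ pi_pos, div_le_one pi_pos]
  constructor <;> linarith [h.1, h.2]

lemma abs_layerProd_le_one {θ₀ : ℝ} (h : θ₀ ∈ Icc 0 π) (s : Finset ℕ) :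
    |layerProd θ₀ s| ≤ 1 := by
  rw [layerProd, Finset.abs_prod]
  exact Finset.prod_le_one (fun _ _ ↦ abs_nonneg _)
    fun j _ ↦ abs_pi_sub_div_pi_le_one (thetaSeq_mem_Icc h j)

lemma abs_layerProd_sub_le {a b : ℝ} (ha : a ∈ Icc 0 π) (hb : b ∈ Icc 0 π) (s : Finset ℕ) :
    |layerProd b s - layerProd a s| ≤ s.card * (|a - b| / π) := by
  calc |layerProd b s - layerProd a s|
      ≤ ∑ j ∈ s, |(π - thetaSeq b j) / π - (π - thetaSeq a j) / π| :=
        abs_prod_sub_prod_le s (fun j _ ↦ abs_pi_sub_div_pi_le_one (thetaSeq_mem_Icc hb j))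
          fun j _ ↦ abs_pi_sub_div_pi_le_one (thetaSeq_mem_Icc ha j)
    _ ≤ ∑ _j ∈ s, |a - b| / π := by
        gcongr with j
        rw [← sub_div, abs_div, abs_of_pos pi_pos, sub_sub_sub_cancel_left]
        exact div_le_div_of_nonneg_right (abs_thetaSeq_sub_le ha hb j) pi_pos.le
    _ = s.card * (|a - b| / π) := by rw [Finset.sum_const, nsmul_eq_mul]

lemma abs_sin_div_pi_le {θ : ℝ} : |sin θ / π| ≤ 1 / π := by
  rw [abs_div, abs_of_pos pi_pos]
  gcongr
  exact abs_sin_le_one θ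

lemma abs_sinSum_le (d : ℕ) {θ₀ : ℝ} (h : θ₀ ∈ Icc 0 π) : |sinSum d θ₀| ≤ d * (1 / π) := by
  calc |sinSum d θ₀|
      ≤ ∑ i ∈ Finset.range d, |sin (thetaSeq θ₀ i) / π * layerProd θ₀ (Finset.Ico (i + 1) d)| :=
        Finset.abs_sum_le_sum_abs _ _
    _ ≤ ∑ _i ∈ Finset.range d, 1 / π * 1 := by
        gcongr with i
        rw [abs_mul]
        exact mul_le_mul abs_sin_div_pi_le (abs_layerProd_le_one h _) (abs_nonneg _)
          (by positivity)
    _ = d * (1 / π) := by simp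

lemma abs_sinSum_sub_le (d : ℕ) {a b : ℝ} (ha : a ∈ Icc 0 π) (hb : b ∈ Icc 0 π) :
    |sinSum d b - sinSum d a| ≤ d * (1 + d / π) * (|a - b| / π) := by
  set δ := |a - b| / π
  have hterm : ∀ i ∈ Finset.range d,
      |sin (thetaSeq b i) / π * layerProd b (Finset.Ico (i + 1) d)
        - sin (thetaSeq a i) / π * layerProd a (Finset.Ico (i + 1) d)| ≤ (1 + d / π) * δ := by
    intro i _
    have hsin : |sin (thetaSeq b i) / π - sin (thetaSeq a i) / π| ≤ δ := by
      rw [← sub_div, abs_div, abs_of_pos pi_pos]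
      refine div_le_div_of_nonneg_right ?_ pi_pos.le
      exact (abs_sin_sub_sin_le _ _).trans
        ((abs_thetaSeq_sub_le hb ha i).trans_eq (abs_sub_comm b a))
    have hprod : |layerProd b (Finset.Ico (i + 1) d) - layerProd a (Finset.Ico (i + 1) d)|
        ≤ d * δ := by
      refine (abs_layerProd_sub_le ha hb _).trans ?_
      gcongr
      simp
    calc _ ≤ |sin (thetaSeq b i) / π|
              * |layerProd b (Finset.Ico (i + 1) d) - layerProd a (Finset.Ico (i + 1) d)|
            + |sin (thetaSeq b i) / π - sin (thetaSeq a i) / π|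
              * |layerProd a (Finset.Ico (i + 1) d)| := abs_mul_sub_mul_le _ _ _ _
      _ ≤ 1 / π * (d * δ) + δ * 1 :=
        add_le_add (mul_le_mul abs_sin_div_pi_le hprod (abs_nonneg _) (by positivity))
          (mul_le_mul hsin (abs_layerProd_le_one ha _) (abs_nonneg _) (by positivity))
      _ = (1 + d / π) * δ := by ring
  calc |sinSum d b - sinSum d a|
      ≤ ∑ i ∈ Finset.range d, |sin (thetaSeq b i) / π * layerProd b (Finset.Ico (i + 1) d)
        - sin (thetaSeq a i) / π * layerProd a (Finset.Ico (i + 1) d)| := by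
        rw [sinSum, sinSum, ← Finset.sum_sub_distrib]
        exact Finset.abs_sum_le_sum_abs _ _
    _ ≤ ∑ _i ∈ Finset.range d, (1 + d / π) * δ := Finset.sum_le_sum hterm
    _ = d * (1 + d / π) * δ := by simp [mul_assoc]

section Angle

open InnerProductGeometry NormedSpace

variable {V : Type*} [NormedAddCommGroup V] [InnerProductSpace ℝ V]

lemma abs_angle_sub_angle_le (x y w : V) : |angle x w - angle y w| ≤ angle x y := by
  rw [abs_sub_le_iff]
  constructor
  · linarith [angle_le_angle_add_angle x y w]
  · linarith [angle_le_angle_add_angle y x w, angle_comm x y]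

lemma angle_le_pi_div_two_mul_norm_sub {u v : V} (hu : ‖u‖ = 1) (hv : ‖v‖ = 1) :
    angle u v ≤ π / 2 * ‖u - v‖ := by
  set θ := angle u v
  have hθ : θ / 2 ∈ Icc 0 (π / 2) :=
    ⟨by positivity [angle_nonneg u v], by linarith [angle_le_pi u v]⟩
  have hchord : ‖u - v‖ = 2 * sin (θ / 2) := by
    have hsq : ‖u - v‖ ^ 2 = (2 * sin (θ / 2)) ^ 2 := by
      rw [sq, norm_sub_sq_eq_norm_sq_add_norm_sq_sub_two_mul_norm_mul_norm_mul_cos_angle, hu, hv]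
      have hcos : cos θ = cos (θ / 2) ^ 2 - sin (θ / 2) ^ 2 := by
        rw [← cos_two_mul']; ring_nf
      linear_combination (-2) * hcos - 2 * sin_sq_add_cos_sq (θ / 2)
    have hsin : 0 ≤ sin (θ / 2) := sin_nonneg_of_nonneg_of_le_pi hθ.1 (by linarith [hθ.2, pi_pos])
    rw [← sqrt_sq (norm_nonneg _), hsq, sqrt_sq (by positivity)]
  calc θ = π * (2 / π * (θ / 2)) := by field_simp
    _ ≤ π * sin (θ / 2) := by gcongr; exact mul_le_sin hθ.1 hθ.2
    _ = π / 2 * ‖u - v‖ := by rw [hchord]; ring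

lemma norm_normalize_sub_normalize_le {x y : V} (hx : x ≠ 0) (hy : y ≠ 0) :
    ‖NormedSpace.normalize x - NormedSpace.normalize y‖ ≤ 2 * ‖x‖⁻¹ * ‖x - y‖ := by
  have hx' : ‖x‖ ≠ 0 := norm_ne_zero_iff.2 hx
  have hy' : ‖y‖ ≠ 0 := norm_ne_zero_iff.2 hy
  have hsplit : NormedSpace.normalize x - NormedSpace.normalize y =
      ‖x‖⁻¹ • (x - y + (‖y‖ - ‖x‖) • NormedSpace.normalize y) := by
    simp only [NormedSpace.normalize]
    match_scalars
    · field_simp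
    · field_simp
      ring
  calc ‖NormedSpace.normalize x - NormedSpace.normalize y‖
      ≤ ‖x‖⁻¹ * (‖x - y‖ + |‖y‖ - ‖x‖| * ‖NormedSpace.normalize y‖) := by
        rw [hsplit, norm_smul, norm_inv, norm_norm]
        gcongr
        exact (norm_add_le _ _).trans_eq (by rw [norm_smul, Real.norm_eq_abs])
    _ ≤ ‖x‖⁻¹ * (‖x - y‖ + ‖x - y‖ * 1) := by
        rw [norm_normalize_eq_one_iff.2 hy]
        gcongr
        exact (abs_norm_sub_norm_le y x).trans_eq (norm_sub_rev y x)
    _ = 2 * ‖x‖⁻¹ * ‖x - y‖ := by ring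

lemma abs_angle_sub_angle_le_pi_mul {x y : V} (hx : x ≠ 0) (hy : y ≠ 0) (w : V) :
    |angle x w - angle y w| ≤ π * ‖x‖⁻¹ * ‖x - y‖ :=
  calc |angle x w - angle y w|
      ≤ angle (NormedSpace.normalize x) (NormedSpace.normalize y) := by
        rw [angle_normalize_left, angle_normalize_right]
        exact abs_angle_sub_angle_le x y w
    _ ≤ π / 2 * ‖NormedSpace.normalize x - NormedSpace.normalize y‖ :=
        angle_le_pi_div_two_mul_norm_sub (norm_normalize_eq_one_iff.2 hx)
          (norm_normalize_eq_one_iff.2 hy)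
    _ ≤ π / 2 * (2 * ‖x‖⁻¹ * ‖x - y‖) := by
        gcongr
        exact norm_normalize_sub_normalize_le hx hy
    _ = π * ‖x‖⁻¹ * ‖x - y‖ := by ring

end Angle

lemma two_pi_mul_le (d : ℕ) : 2 * π * d ≤ 4 * d + 3 * (d : ℝ) ^ 2 := by
  rcases Nat.eq_zero_or_pos d with rfl | hd
  · simp
  · have hd : (1 : ℝ) ≤ d := by exact_mod_cast hd
    nlinarith [pi_lt_d2]

section Field

open InnerProductGeometry NormedSpace

variable {k : ℕ}

lemma hfield_eq (d : ℕ) (xs x : EuclideanSpace ℝ (Fin k)) :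
    hfield k d xs x =
      (-((2 ^ d : ℝ)⁻¹ * layerProd (angle x xs) (Finset.range d))) • xs +
        (2 ^ d : ℝ)⁻¹ • (x - (sinSum d (angle x xs) * ‖xs‖) • NormedSpace.normalize x) := by
  rw [hfield, NormedSpace.normalize, smul_smul, div_eq_mul_inv, mul_assoc]
  rfl

lemma norm_hfield_sub_hfield_le (d : ℕ) (xs : EuclideanSpace ℝ (Fin k))
    {x y : EuclideanSpace ℝ (Fin k)} (hy : y ≠ 0) :
    ‖hfield k d xs x - hfield k d xs y‖ ≤ (2 ^ d : ℝ)⁻¹ *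
      (|layerProd (angle y xs) (Finset.range d) - layerProd (angle x xs) (Finset.range d)|
          * ‖xs‖ + ‖x - y‖ +
        ‖xs‖ * (|sinSum d (angle y xs) - sinSum d (angle x xs)| +
          |sinSum d (angle x xs)| * ‖NormedSpace.normalize x - NormedSpace.normalize y‖)) := by
  set Pa := layerProd (angle x xs) (Finset.range d)
  set Pb := layerProd (angle y xs) (Finset.range d)
  set Sa := sinSum d (angle x xs)
  set Sb := sinSum d (angle y xs)
  set u := NormedSpace.normalize x
  set v := NormedSpace.normalize y
  have hdiff : hfield k d xs x - hfield k d xs y =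
      (2 ^ d : ℝ)⁻¹ • ((Pb - Pa) • xs + (x - y) + ‖xs‖ • ((Sb - Sa) • v + Sa • (v - u))) := by
    rw [hfield_eq, hfield_eq]
    module
  have hv : ‖v‖ = 1 := norm_normalize_eq_one_iff.2 hy
  rw [hdiff, norm_smul, norm_inv, norm_pow, Real.norm_two]
  gcongr
  refine (norm_add₃_le).trans ?_
  simp only [norm_smul, Real.norm_eq_abs, abs_norm]
  gcongr
  refine (norm_add_le _ _).trans ?_
  rw [norm_smul, norm_smul, hv, mul_one, norm_sub_rev v u, Real.norm_eq_abs, Real.norm_eq_abs]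

end Field

open InnerProductGeometry in
theorem stmt17_general (k d : ℕ) (xs : EuclideanSpace ℝ (Fin k))
    (x y : EuclideanSpace ℝ (Fin k)) (hx : x ≠ 0) (hy : y ≠ 0) :
    ‖hfield k d xs x - hfield k d xs y‖ ≤
      (1 / 2 ^ d +
        ((6 * (d : ℝ) + 4 * (d : ℝ) ^ 2) / (Real.pi * 2 ^ d)) *
          max (1 / ‖x‖) (1 / ‖y‖) * ‖xs‖) * ‖x - y‖ := by
  set M := max (1 / ‖x‖) (1 / ‖y‖)
  set N := ‖x - y‖
  have ha : angle x xs ∈ Icc 0 π := ⟨angle_nonneg _ _, angle_le_pi _ _⟩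
  have hb : angle y xs ∈ Icc 0 π := ⟨angle_nonneg _ _, angle_le_pi _ _⟩
  have hxM : ‖x‖⁻¹ ≤ M := one_div ‖x‖ ▸ le_max_left _ _
  have hangle : |angle x xs - angle y xs| / π ≤ M * N := by
    rw [div_le_iff₀' pi_pos, ← mul_assoc]
    exact (abs_angle_sub_angle_le_pi_mul hx hy xs).trans (by gcongr)
  have hP : |layerProd (angle y xs) (Finset.range d) - layerProd (angle x xs) (Finset.range d)|
      ≤ d * (M * N) := by
    refine (abs_layerProd_sub_le ha hb _).trans ?_
    rw [Finset.card_range]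
    gcongr
  have hS : |sinSum d (angle y xs) - sinSum d (angle x xs)| ≤ d * (1 + d / π) * (M * N) :=
    (abs_sinSum_sub_le d ha hb).trans (by gcongr)
  have hu : ‖NormedSpace.normalize x - NormedSpace.normalize y‖ ≤ 2 * M * N :=
    (norm_normalize_sub_normalize_le hx hy).trans (by gcongr)
  calc ‖hfield k d xs x - hfield k d xs y‖
      ≤ (2 ^ d : ℝ)⁻¹ * (d * (M * N) * ‖xs‖ + N +
          ‖xs‖ * (d * (1 + d / π) * (M * N) + d * (1 / π) * (2 * M * N))) := by
        refine (norm_hfield_sub_hfield_le d xs hy).trans ?_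
        gcongr
        exact abs_sinSum_le d ha
    _ = (2 ^ d : ℝ)⁻¹ * N +
          (2 ^ d : ℝ)⁻¹ * ‖xs‖ * M * N * ((2 * π * d + (d ^ 2 + 2 * d)) / π) := by
        field_simp
        ring
    _ ≤ (2 ^ d : ℝ)⁻¹ * N + (2 ^ d : ℝ)⁻¹ * ‖xs‖ * M * N * ((6 * d + 4 * d ^ 2) / π) := by
        gcongr _ + _ * (?_ / _)
        linarith [two_pi_mul_le d]
    _ = _ := by ring

theorem stmt17 (k d : ℕ) (xs : EuclideanSpace ℝ (Fin k)) (hxs : xs ≠ 0)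
    (x y : EuclideanSpace ℝ (Fin k)) (hx : x ≠ 0) (hy : y ≠ 0) :
    ‖hfield k d xs x - hfield k d xs y‖ ≤
      (1 / 2 ^ d +
        ((6 * (d : ℝ) + 4 * (d : ℝ) ^ 2) / (Real.pi * 2 ^ d)) *
          max (1 / ‖x‖) (1 / ‖y‖) * ‖xs‖) * ‖x - y‖ :=
  stmt17_general k d xs x y hx hy
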